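/- For every n ∈ ℕ, G_A acts transitively on the set Xⁿ of words of length n over X: for all words u, v over X with |u| = |v| = n, there exists g ∈ G_A with g(u) = v. -/

import Mathlib

/-!
We formalize the automaton `A` of the paper: alphabet `X = {1,2,3}` is encoded as
`Fin 3` (letter `i+1` ↦ `i`), states `a, b, c` are encoded as `0, 1, 2 : Fin 3`.
Each state induces a permutation of the space `ℕ → Fin 3` of infinite sequences.

Note on conventions: in the paper, products of tree automorphisms compose
left-to-right (in a word `s₁s₂⋯sₙ`, the letter `s₁` acts first); in Mathlib,
`(f * g) w = f (g w)`, i.e. the right factor acts first.  Hence a paper word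
`uv` is rendered as the Lean product `v * u`; e.g. the paper's `α = ab⁻¹`
(apply `a`, then `b⁻¹`) is `b⁻¹ * a` below.
-/

namespace Lamplighter

section Generic

variable {S X : Type*}

/-- The state of the automaton after reading the first `n` letters of `w`, starting at `s`. -/
def run (nxt : S → X → S) (s : S) (w : ℕ → X) : ℕ → S
  | 0 => s
  | n + 1 => nxt (run nxt s w n) (w n)

/-- The output sequence of the automaton started in state `s` reading `w`. -/
def fwd (nxt : S → X → S) (out : S → Equiv.Perm X) (s : S) (w : ℕ → X) : ℕ → X :=
  fun n => out (run nxt s w n) (w n)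

/-- Transition function of the inverse automaton. -/
def invNxt (nxt : S → X → S) (out : S → Equiv.Perm X) (s : S) (y : X) : S :=
  nxt s ((out s).symm y)

/-- The action of the inverse automaton, started at state `s`. -/
def bwd (nxt : S → X → S) (out : S → Equiv.Perm X) (s : S) (y : ℕ → X) : ℕ → X :=
  fun n => (out (run (invNxt nxt out) s y n)).symm (y n)

theorem run_inv_fwd (nxt : S → X → S) (out : S → Equiv.Perm X) (s : S) (w : ℕ → X) :
    ∀ n, run (invNxt nxt out) s (fwd nxt out s w) n = run nxt s w n := by
  intro n
  induction n with
  | zero => rfl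
  | succ n ih => simp [run, ih, invNxt, fwd]

theorem run_bwd (nxt : S → X → S) (out : S → Equiv.Perm X) (s : S) (y : ℕ → X) :
    ∀ n, run nxt s (bwd nxt out s y) n = run (invNxt nxt out) s y n := by
  intro n
  induction n with
  | zero => rfl
  | succ n ih => simp [run, ih, bwd, invNxt]

/-- The permutation of the space of infinite sequences induced by state `s`
of an invertible automaton. -/
def statePerm (nxt : S → X → S) (out : S → Equiv.Perm X) (s : S) : Equiv.Perm (ℕ → X) where
  toFun := fwd nxt out s
  invFun := bwd nxt out s
  left_inv := fun w => funext fun n => by simp [bwd, run_inv_fwd, fwd]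
  right_inv := fun y => funext fun n => by simp [fwd, run_bwd, bwd]

end Generic

/-- The alphabet `X = {1,2,3}`, encoded as `Fin 3`. -/
abbrev X3 := Fin 3

/-- Transition function of the automaton `A` (states `a = 0`, `b = 1`, `c = 2`):
from `a`: `1 ↦ a, 2 ↦ b, 3 ↦ c`; from `b`: `1 ↦ c, 2 ↦ a, 3 ↦ b`;
from `c`: `1 ↦ b, 2 ↦ c, 3 ↦ a`. -/
def nxtA : Fin 3 → X3 → Fin 3 := ![![0, 1, 2], ![2, 0, 1], ![1, 2, 0]]

/-- Output permutations of the automaton `A`: state `a` acts on letters as the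
transposition `(2 3)`, state `b` as `(1 3)`, state `c` as `(1 2)`. -/
def outA : Fin 3 → Equiv.Perm X3 := ![Equiv.swap 1 2, Equiv.swap 0 2, Equiv.swap 0 1]

/-- The permutation of `X^ℕ` given by state `a`. -/
def a : Equiv.Perm (ℕ → X3) := statePerm nxtA outA 0

/-- The permutation of `X^ℕ` given by state `b`. -/
def b : Equiv.Perm (ℕ → X3) := statePerm nxtA outA 1

/-- The permutation of `X^ℕ` given by state `c`. -/
def c : Equiv.Perm (ℕ → X3) := statePerm nxtA outA 2

/-- The group `G_A` generated by the automaton `A`. -/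
def GA : Subgroup (Equiv.Perm (ℕ → X3)) := Subgroup.closure {a, b, c}

/-- The element `α = ab⁻¹` of the paper (first apply `a`, then `b⁻¹`). -/
def α : Equiv.Perm (ℕ → X3) := b⁻¹ * a

/-- The set `W` of permutations acting coordinatewise by a sequence of even
permutations of the alphabet. -/
def W : Set (Equiv.Perm (ℕ → X3)) :=
  {g | ∃ π : ℕ → Equiv.Perm X3, (∀ n, Equiv.Perm.sign (π n) = 1) ∧
    ∀ (w : ℕ → X3) (n : ℕ), g w n = π n (w n)}

/-- The subgroup `N` generated by the conjugates `a⁻ⁿ α aⁿ`, `n ∈ ℤ`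
(in Lean's composition order: `aⁿ * α * a⁻ⁿ`). -/
def N : Subgroup (Equiv.Perm (ℕ → X3)) :=
  Subgroup.closure {g | ∃ n : ℤ, g = a ^ n * α * a ^ (-n)}

/-!
Read letters and states as elements of `ℤ/3`: in state `s` the automaton `A` outputs `-s - x`
on letter `x` and moves to `x - s`. Hence `a` is additive on `(ℤ/3)^ℕ`, `α = b⁻¹a` is the
translation by `-1`, and conjugating the translation by `v` with `a` gives the translation by
`a v`. So the translation vectors realised in `G_A` form a group closed under `a`, and
`v ↦ a v + v` (which is minus the state sequence of `a` on `v`) moves the first nonzero entry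
one step to the right. Starting from `-1` this yields a triangular family of translations,
which reaches every prefix.
-/

open Fin.CommRing

lemma nxtA_apply (s x : X3) : nxtA s x = x - s := by revert s x; decide

lemma outA_apply (s x : X3) : outA s x = -s - x := by revert s x; decide

section Translations

variable {M : Type*} [AddGroup M]

def translationSubgroup (H : Subgroup (Equiv.Perm M)) : AddSubgroup M where
  carrier := {v | Equiv.addRight v ∈ H}
  add_mem' {v v'} (hv : Equiv.addRight v ∈ H) (hv' : Equiv.addRight v' ∈ H) := by
    change Equiv.addRight (v + v') ∈ H
    simpa only [Equiv.addRight_add] using mul_mem hv' hv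
  zero_mem' := by
    change Equiv.addRight 0 ∈ H
    simpa only [Equiv.addRight_zero] using one_mem H
  neg_mem' {v} (hv : Equiv.addRight v ∈ H) := by
    change Equiv.addRight (-v) ∈ H
    simpa only [Equiv.neg_addRight] using inv_mem hv

lemma mul_addRight_mul_inv {f : Equiv.Perm M} (hf : ∀ x y, f (x + y) = f x + f y) (v : M) :
    f * Equiv.addRight v * f⁻¹ = Equiv.addRight (f v) := by
  ext1 w
  simp [hf]

lemma apply_mem_translationSubgroup {H : Subgroup (Equiv.Perm M)} {f : Equiv.Perm M}
    (hfH : f ∈ H) (hf : ∀ x y, f (x + y) = f x + f y) {v : M}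
    (hv : v ∈ translationSubgroup H) : f v ∈ translationSubgroup H := by
  change Equiv.addRight (f v) ∈ H
  rw [← mul_addRight_mul_inv hf]
  exact mul_mem (mul_mem hfH hv) (inv_mem hfH)

end Translations

lemma run_nxtA_succ (s : X3) (w : ℕ → X3) (n : ℕ) :
    run nxtA s w (n + 1) = w n - run nxtA s w n :=
  nxtA_apply _ _

lemma run_nxtA_add (s t : X3) (w v : ℕ → X3) (n : ℕ) :
    run nxtA (s + t) (w + v) n = run nxtA s w n + run nxtA t v n := by
  induction n with
  | zero => rfl
  | succ n ih =>
    rw [run_nxtA_succ, run_nxtA_succ, run_nxtA_succ, ih, Pi.add_apply]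
    ring

lemma statePerm_nxtA_apply (s : X3) (w : ℕ → X3) (n : ℕ) :
    statePerm nxtA outA s w n = -run nxtA s w n - w n :=
  outA_apply _ _

lemma a_add (w v : ℕ → X3) : a (w + v) = a w + a v := by
  funext n
  have h := run_nxtA_add 0 0 w v n
  rw [add_zero] at h
  simp only [a, statePerm_nxtA_apply, h, Pi.add_apply]
  ring

lemma a_add_self (v : ℕ → X3) : a v + v = -run nxtA 0 v := by
  funext n
  simp only [a, statePerm_nxtA_apply, Pi.add_apply, Pi.neg_apply]
  ring

lemma run_nxtA_one_neg_one (n : ℕ) : run nxtA 1 (-1) n = 1 := by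
  induction n with
  | zero => rfl
  | succ n ih => rw [run_nxtA_succ, ih, Pi.neg_apply, Pi.one_apply]; decide

lemma b_add_neg_one (w : ℕ → X3) : b (w + -1) = a w := by
  funext n
  have h := run_nxtA_add 0 1 w (-1) n
  rw [zero_add, run_nxtA_one_neg_one] at h
  simp only [a, b, statePerm_nxtA_apply, h, Pi.add_apply, Pi.neg_apply, Pi.one_apply]
  ring

lemma α_eq_addRight : α = Equiv.addRight (-1) := by
  ext1 w
  rw [α, Equiv.Perm.mul_apply, ← b_add_neg_one]
  exact b.symm_apply_apply _

lemma a_mem_GA : a ∈ GA := Subgroup.subset_closure (by simp)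

lemma b_mem_GA : b ∈ GA := Subgroup.subset_closure (by simp)

lemma neg_one_mem_translationSubgroup_GA : (-1 : ℕ → X3) ∈ translationSubgroup GA := by
  change Equiv.addRight (-1) ∈ GA
  rw [← α_eq_addRight]
  exact mul_mem (inv_mem b_mem_GA) a_mem_GA

lemma run_nxtA_zero_eq_zero {v : ℕ → X3} {k : ℕ} (hv : ∀ i < k, v i = 0) :
    ∀ i ≤ k, run nxtA 0 v i = 0
  | 0, _ => rfl
  | i + 1, hi => by
    rw [run_nxtA_succ, hv i hi, run_nxtA_zero_eq_zero hv i (Nat.le_of_succ_le hi), sub_zero]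

lemma exists_mem_translationSubgroup_GA_lowest (k : ℕ) :
    ∃ v ∈ translationSubgroup GA, (∀ i < k, v i = 0) ∧ v k ≠ 0 := by
  induction k with
  | zero => exact ⟨-1, neg_one_mem_translationSubgroup_GA, by simp, by decide⟩
  | succ k ih =>
    obtain ⟨v, hv, hv_lt, hv_k⟩ := ih
    have hrun := run_nxtA_zero_eq_zero hv_lt
    refine ⟨a v + v, add_mem (apply_mem_translationSubgroup a_mem_GA a_add hv) hv, ?_, ?_⟩
    · intro i hi
      rw [a_add_self, Pi.neg_apply, hrun i (Nat.lt_succ_iff.mp hi), neg_zero]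
    · rw [a_add_self, Pi.neg_apply, run_nxtA_succ, hrun k le_rfl, sub_zero, neg_ne_zero]
      exact hv_k

lemma exists_eq_on_prefix (S : AddSubgroup (ℕ → X3))
    (hS : ∀ k, ∃ v ∈ S, (∀ i < k, v i = 0) ∧ v k ≠ 0) (τ : ℕ → X3) :
    ∀ n, ∃ v ∈ S, ∀ i < n, v i = τ i
  | 0 => ⟨0, zero_mem S, by simp⟩
  | n + 1 => by
    obtain ⟨v, hv, hv_eq⟩ := exists_eq_on_prefix S hS τ n
    obtain ⟨z, hz, hz_lt, hz_n⟩ := hS n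
    obtain ⟨m, hm⟩ : ∃ m : X3, m * z n = τ n - v n := by
      revert hz_n; generalize z n = e; generalize τ n - v n = d; revert e d; decide
    refine ⟨v + m.val • z, add_mem hv (nsmul_mem hz m.val), fun i hi => ?_⟩
    rw [Pi.add_apply, Pi.smul_apply, nsmul_eq_mul, Fin.cast_val_eq_self]
    rcases Nat.lt_succ_iff_lt_or_eq.mp hi with hi | rfl
    · rw [hv_eq i hi, hz_lt i hi, mul_zero, add_zero]
    · rw [hm, add_sub_cancel]

/-- `G_A` acts transitively on `Xⁿ` for every `n`: for all words
`u, v` of length `n` there is `g ∈ G_A` mapping every sequence with prefix `u`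
to a sequence with prefix `v`. -/
theorem GA_transitive_on_levels :
    ∀ (n : ℕ) (u v : Fin n → X3), ∃ g ∈ GA,
      ∀ w : ℕ → X3, (∀ i : Fin n, w i.val = u i) → ∀ i : Fin n, g w i.val = v i := by
  intro n u v
  obtain ⟨t, ht, ht_eq⟩ := exists_eq_on_prefix (translationSubgroup GA)
    exists_mem_translationSubgroup_GA_lowest
    (fun i => if h : i < n then v ⟨i, h⟩ - u ⟨i, h⟩ else 0) n
  refine ⟨Equiv.addRight t, ht, fun w hw i => ?_⟩
  change w i + t i = v i
  rw [hw, ht_eq i i.isLt, dif_pos i.isLt, add_sub_cancel]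

end Lamplighter
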